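/- Universal property of Σ: if S and S' are Γ-semigroups (over the same Γ) with universal semigroups Σ and Σ' (both built with the same fixed γ₀ ∈ Γ), then for every Γ-semigroup homomorphism φ: S → S' there is a unique semigroup homomorphism φ̂: Σ → Σ' fixing every element of Γ and satisfying φ̂ ∘ μ = μ' ∘ φ, where μ: S → Σ and μ': S' → Σ' are the canonical maps. -/

import Mathlib

open FreeSemigroup

section GammaSemigroup

variable {S Γ : Type}

/-- One-step rewriting on words over S ⊕ Γ. -/
inductive GStep (m : S → Γ → S → S) (γ₀ : Γ) : List (S ⊕ Γ) → List (S ⊕ Γ) → Prop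
  | gg (u v : List (S ⊕ Γ)) (γ₁ γ₂ : Γ) :
      GStep m γ₀ (u ++ Sum.inr γ₁ :: Sum.inr γ₂ :: v) (u ++ Sum.inr γ₁ :: v)
  | xgy (u v : List (S ⊕ Γ)) (x : S) (γ : Γ) (y : S) :
      GStep m γ₀ (u ++ Sum.inl x :: Sum.inr γ :: Sum.inl y :: v) (u ++ Sum.inl (m x γ y) :: v)
  | xy (u v : List (S ⊕ Γ)) (x y : S) :
      GStep m γ₀ (u ++ Sum.inl x :: Sum.inl y :: v) (u ++ Sum.inl (m x γ₀ y) :: v)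

/-- The defining relations on the free semigroup on S ⊕ Γ. -/
def GRel (m : S → Γ → S → S) (γ₀ : Γ) :
    FreeSemigroup (S ⊕ Γ) → FreeSemigroup (S ⊕ Γ) → Prop :=
  fun a b =>
    (∃ γ₁ γ₂ : Γ, a = of (Sum.inr γ₁) * of (Sum.inr γ₂) ∧ b = of (Sum.inr γ₁)) ∨
    (∃ (x y : S) (γ : Γ), a = of (Sum.inl x) * of (Sum.inr γ) * of (Sum.inl y) ∧
      b = of (Sum.inl (m x γ y))) ∨
    (∃ x y : S, a = of (Sum.inl x) * of (Sum.inl y) ∧ b = of (Sum.inl (m x γ₀ y)))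

/-- The congruence generated by the defining relations. -/
def GCon (m : S → Γ → S → S) (γ₀ : Γ) : Con (FreeSemigroup (S ⊕ Γ)) := conGen (GRel m γ₀)

/-- The universal semigroup Σ of the Γ-semigroup S. -/
abbrev USem (m : S → Γ → S → S) (γ₀ : Γ) := (GCon m γ₀).Quotient

/-- The canonical map μ : S → Σ. -/
def gmu (m : S → Γ → S → S) (γ₀ : Γ) (x : S) : USem m γ₀ :=
  ((of (Sum.inl x) : FreeSemigroup (S ⊕ Γ)) : (GCon m γ₀).Quotient)

/-- The canonical map Γ → Σ. -/
def giota (m : S → Γ → S → S) (γ₀ : Γ) (γ : Γ) : USem m γ₀ :=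
  ((of (Sum.inr γ) : FreeSemigroup (S ⊕ Γ)) : (GCon m γ₀).Quotient)

/-- Principal left ideal of an element of a semigroup. -/
def pLeft {T : Type} [Semigroup T] (a : T) : Set T := {w | ∃ t : T, w = t * a} ∪ {a}

/-- Principal right ideal of an element of a semigroup. -/
def pRight {T : Type} [Semigroup T] (a : T) : Set T := {w | ∃ t : T, w = a * t} ∪ {a}

/-- Principal left ideal in the Γ-semigroup: SΓx ∪ {x}. -/
def pLeftG (m : S → Γ → S → S) (x : S) : Set S := {y | ∃ (s : S) (γ : Γ), y = m s γ x} ∪ {x}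

/-- Principal right ideal in the Γ-semigroup: xΓS ∪ {x}. -/
def pRightG (m : S → Γ → S → S) (x : S) : Set S := {y | ∃ (γ : Γ) (s : S), y = m x γ s} ∪ {x}

/-- Green's H relation on the Γ-semigroup. -/
def HrelG (m : S → Γ → S → S) (a b : S) : Prop := pLeftG m a = pLeftG m b ∧ pRightG m a = pRightG m b

/-- S_δ is a simple semigroup: its only two-sided ideal is S itself. -/
def SimpleAt (m : S → Γ → S → S) (δ : Γ) : Prop :=
  ∀ J : Set S, J.Nonempty → (∀ t : S, ∀ j ∈ J, m t δ j ∈ J ∧ m j δ t ∈ J) → J = Set.univ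

/-- e is an idempotent of S_δ. -/
def IdemAt (m : S → Γ → S → S) (δ : Γ) (e : S) : Prop := m e δ e = e

/-- e is a primitive idempotent of S_δ. -/
def PrimAt (m : S → Γ → S → S) (δ : Γ) (e : S) : Prop :=
  IdemAt m δ e ∧ ∀ f, IdemAt m δ f → m e δ f = f → m f δ e = f → f = e

/-- S_δ is completely simple. -/
def CSimpleAt (m : S → Γ → S → S) (δ : Γ) : Prop := SimpleAt m δ ∧ ∃ e, PrimAt m δ e

/-- S_δ has no zero element. -/
def NoZeroAt (m : S → Γ → S → S) (δ : Γ) : Prop := ¬ ∃ z : S, ∀ t : S, m z δ t = z ∧ m t δ z = z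

/-- L is a left ideal of S_δ. -/
def LIdealAt (m : S → Γ → S → S) (δ : Γ) (L : Set S) : Prop :=
  L.Nonempty ∧ ∀ t : S, ∀ l ∈ L, m t δ l ∈ L

/-- L is a minimal left ideal of S_δ. -/
def MinLIdealAt (m : S → Γ → S → S) (δ : Γ) (L : Set S) : Prop :=
  LIdealAt m δ L ∧ ∀ L' ⊆ L, LIdealAt m δ L' → L' = L

/-- S_δ is a group. -/
def GroupAt (m : S → Γ → S → S) (δ : Γ) : Prop :=
  ∃ e : S, (∀ a, m e δ a = a ∧ m a δ e = a) ∧ ∀ a, ∃ b, m a δ b = e ∧ m b δ a = e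

/-- G is a subgroup (a sub-semigroup that is a group) of the semigroup T. -/
def IsSubgroupOf {T : Type} [Semigroup T] (G : Set T) : Prop :=
  (∀ a ∈ G, ∀ b ∈ G, a * b ∈ G) ∧
  ∃ e ∈ G, (∀ g ∈ G, e * g = g ∧ g * e = g) ∧ ∀ g ∈ G, ∃ h ∈ G, g * h = e ∧ h * g = e

/-- The set Σ' = Σ \ Γ. -/
def USem' (m : S → Γ → S → S) (γ₀ : Γ) : Set (USem m γ₀) := {w | ¬ ∃ γ : Γ, w = giota m γ₀ γ}

end GammaSemigroup

/-! `φ ⊕ id` sends each defining relation of `Σ` to a defining relation of `Σ'`, so it descends to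
the quotients; uniqueness holds because `Σ` is generated by the images of `S` and `Γ`. -/

namespace Con

variable {M P : Type*} [Mul M] [Mul P]

/-- `Con.lift` requires monoids; this is its analogue for magmas. -/
def liftMulHom (c : Con M) (f : M →ₙ* P) (H : c ≤ ker f) : c.Quotient →ₙ* P where
  toFun q := c.liftOn q f fun _ _ h => H h
  map_mul' x y := Con.induction_on₂ x y fun a b => map_mul f a b

theorem mulHom_ext {c : Con M} {f g : c.Quotient →ₙ* P}
    (h : f.comp c.mkMulHom = g.comp c.mkMulHom) : f = g :=
  MulHom.ext fun q => Con.induction_on q fun a => DFunLike.congr_fun h a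

end Con

section UniversalProperty

variable {S S' Γ : Type} {m : S → Γ → S → S} {m' : S' → Γ → S' → S'} {φ : S → S'}

theorem gRel_map (γ₀ : Γ) (hφ : ∀ (x y : S) (γ : Γ), φ (m x γ y) = m' (φ x) γ (φ y))
    {a b : FreeSemigroup (S ⊕ Γ)} (h : GRel m γ₀ a b) :
    GRel m' γ₀ (map (Sum.map φ id) a) (map (Sum.map φ id) b) := by
  rcases h with ⟨γ₁, γ₂, rfl, rfl⟩ | ⟨x, y, γ, rfl, rfl⟩ | ⟨x, y, rfl, rfl⟩
  · exact Or.inl ⟨γ₁, γ₂, rfl, rfl⟩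
  · exact Or.inr (Or.inl ⟨φ x, φ y, γ, rfl, by simp [hφ]⟩)
  · exact Or.inr (Or.inr ⟨φ x, φ y, rfl, by simp [hφ]⟩)

theorem gCon_le_ker_map (γ₀ : Γ) (hφ : ∀ (x y : S) (γ : Γ), φ (m x γ y) = m' (φ x) γ (φ y)) :
    GCon m γ₀ ≤ Con.ker ((GCon m' γ₀).mkMulHom.comp (map (Sum.map φ id))) :=
  Con.conGen_le.mpr fun _ _ h => (GCon m' γ₀).eq.mpr (ConGen.Rel.of _ _ (gRel_map γ₀ hφ h))

namespace USem

def map (γ₀ : Γ) (hφ : ∀ (x y : S) (γ : Γ), φ (m x γ y) = m' (φ x) γ (φ y)) :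
    USem m γ₀ →ₙ* USem m' γ₀ :=
  (GCon m γ₀).liftMulHom _ (gCon_le_ker_map γ₀ hφ)

variable (γ₀ : Γ) (hφ : ∀ (x y : S) (γ : Γ), φ (m x γ y) = m' (φ x) γ (φ y))

theorem map_giota (γ : Γ) : map γ₀ hφ (giota m γ₀ γ) = giota m' γ₀ γ :=
  rfl

theorem map_gmu (x : S) : map γ₀ hφ (gmu m γ₀ x) = gmu m' γ₀ (φ x) :=
  rfl

theorem hom_ext {T : Type*} [Mul T] {Φ Ψ : USem m γ₀ →ₙ* T}
    (hΓ : ∀ γ, Φ (giota m γ₀ γ) = Ψ (giota m γ₀ γ))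
    (hS : ∀ x, Φ (gmu m γ₀ x) = Ψ (gmu m γ₀ x)) : Φ = Ψ :=
  Con.mulHom_ext <| FreeSemigroup.hom_ext <| funext fun
    | .inl x => hS x
    | .inr γ => hΓ γ

end USem

end UniversalProperty

theorem stmt_general (S S' Γ : Type)
    (m : S → Γ → S → S) (m' : S' → Γ → S' → S')
    (γ₀ : Γ) (φ : S → S') (hφ : ∀ (x y : S) (γ : Γ), φ (m x γ y) = m' (φ x) γ (φ y)) :
    ∃! Φ : USem m γ₀ →ₙ* USem m' γ₀,
      (∀ γ : Γ, Φ (giota m γ₀ γ) = giota m' γ₀ γ) ∧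
      (∀ x : S, Φ (gmu m γ₀ x) = gmu m' γ₀ (φ x)) := by
  refine ⟨USem.map γ₀ hφ, ⟨USem.map_giota γ₀ hφ, USem.map_gmu γ₀ hφ⟩, ?_⟩
  rintro Ψ ⟨hΓ, hS⟩
  exact USem.hom_ext γ₀
    (fun γ => by rw [hΓ, USem.map_giota]) (fun x => by rw [hS, USem.map_gmu])

theorem stmt (S S' Γ : Type) [Nonempty S] [Nonempty S'] [Nonempty Γ]
    (m : S → Γ → S → S) (m' : S' → Γ → S' → S')
    (assoc : ∀ (a b c : S) (α β : Γ), m (m a α b) β c = m a α (m b β c))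
    (assoc' : ∀ (a b c : S') (α β : Γ), m' (m' a α b) β c = m' a α (m' b β c))
    (γ₀ : Γ) (φ : S → S') (hφ : ∀ (x y : S) (γ : Γ), φ (m x γ y) = m' (φ x) γ (φ y)) :
    ∃! Φ : USem m γ₀ →ₙ* USem m' γ₀,
      (∀ γ : Γ, Φ (giota m γ₀ γ) = giota m' γ₀ γ) ∧
      (∀ x : S, Φ (gmu m γ₀ x) = gmu m' γ₀ (φ x)) :=
  stmt_general S S' Γ m m' γ₀ φ hφ
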